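/- Let m > 0, let I ⊆ ℝ be an open interval, let u, v : I → ℝ be differentiable, and suppose f(m,u(y),v(y)) = 0 for all y ∈ I. Let x ∈ I be a point at which 3m² − 7m·v(x) + 4m·u(x) − 2v(x)² − 4u(x)v(x) ≠ 0, u′(x) ≠ 0, v′(x) ≠ 0, and at which the first steady-state equation (m + 2v(x))(m + v(x))·u′(x) + 2u(x)(2m + v(x))·v′(x) = 0 holds. Then g(m,u(x),v(x)) = 0. (Indeed, differentiating f = 0 yields u′(x) = v′(x)·(7mu − 3m² − 4mv + 2u² + 4uv)/(3m² − 7mv + 4mu − 2v² − 4uv) at x, and substituting this into the first steady-state equation gives g = 0.) -/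

import Mathlib

/-- The polynomial `f(m,u,v) = (2m − 2v)u² + (3m² − 7mv − 2v²)u + (m³ + 3m²v + 2mv²)`. -/
noncomputable def fPoly (m u v : ℝ) : ℝ :=
  (2 * m - 2 * v) * u ^ 2 + (3 * m ^ 2 - 7 * m * v - 2 * v ^ 2) * u
    + (m ^ 3 + 3 * m ^ 2 * v + 2 * m * v ^ 2)

/-- The polynomial `g(m,u,v) = (7mu − 3m² − 4mv + 2u² + 4uv)(m + 2v)(m + v)
+ (4mu + 2uv)(3m² − 7mv + 4mu − 2v² − 4uv)`. -/
noncomputable def gPoly (m u v : ℝ) : ℝ :=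
  (7 * m * u - 3 * m ^ 2 - 4 * m * v + 2 * u ^ 2 + 4 * u * v) * (m + 2 * v) * (m + v)
    + (4 * m * u + 2 * u * v)
        * (3 * m ^ 2 - 7 * m * v + 4 * m * u - 2 * v ^ 2 - 4 * u * v)

/-! Differentiating `f(m, u, v) = 0` along the interval gives `f_u · u′ + f_v · v′ = 0`.
Multiplying the steady-state equation by `f_u` and substituting `f_u · u′ = −f_v · v′`
leaves `g · v′ = 0`, and `v′ ≠ 0`. -/

/-- The denominator `3m² − 7mv + 4mu − 2v² − 4uv` is `∂f/∂u` and the numerator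
`7mu − 3m² − 4mv + 2u² + 4uv` is `−∂f/∂v`. -/
theorem hasDerivAt_fPoly_comp {m x u' v' : ℝ} {u v : ℝ → ℝ}
    (hu : HasDerivAt u u' x) (hv : HasDerivAt v v' x) :
    HasDerivAt (fun y => fPoly m (u y) (v y))
      ((3 * m ^ 2 - 7 * m * v x + 4 * m * u x - 2 * v x ^ 2 - 4 * u x * v x) * u'
        - (7 * m * u x - 3 * m ^ 2 - 4 * m * v x + 2 * u x ^ 2 + 4 * u x * v x) * v') x := by
  have h := ((((hv.const_mul 2).const_sub (2 * m)).mul (hu.pow 2)).add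
    ((((hv.const_mul (7 * m)).const_sub (3 * m ^ 2)).sub ((hv.pow 2).const_mul 2)).mul hu)).add
    (((hv.const_mul (3 * m ^ 2)).const_add (m ^ 3)).add ((hv.pow 2).const_mul (2 * m)))
  refine (h.congr_of_eventuallyEq (.of_forall fun y => ?_)).congr_deriv ?_
  · simp only [fPoly, Pi.add_apply, Pi.sub_apply, Pi.mul_apply, Pi.pow_apply]
  · simp only [Pi.sub_apply, Pi.pow_apply, Nat.cast_ofNat]
    ring

theorem gPoly_mul_eq_zero {m u v u' v' : ℝ}
    (htan : (3 * m ^ 2 - 7 * m * v + 4 * m * u - 2 * v ^ 2 - 4 * u * v) * u'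
      = (7 * m * u - 3 * m ^ 2 - 4 * m * v + 2 * u ^ 2 + 4 * u * v) * v')
    (hss : (m + 2 * v) * (m + v) * u' + 2 * u * (2 * m + v) * v' = 0) :
    gPoly m u v * v' = 0 := by
  unfold gPoly
  linear_combination (-(m + 2 * v) * (m + v)) * htan
    + (3 * m ^ 2 - 7 * m * v + 4 * m * u - 2 * v ^ 2 - 4 * u * v) * hss

theorem g_vanishes_on_steady_state
    (m : ℝ) (α β : ℝ) (u v : ℝ → ℝ)
    (hu : ∀ y ∈ Set.Ioo α β, DifferentiableAt ℝ u y)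
    (hv : ∀ y ∈ Set.Ioo α β, DifferentiableAt ℝ v y)
    (hf : ∀ y ∈ Set.Ioo α β, fPoly m (u y) (v y) = 0)
    (x : ℝ) (hx : x ∈ Set.Ioo α β)
    (hv' : deriv v x ≠ 0)
    (hss : (m + 2 * v x) * (m + v x) * deriv u x
      + 2 * u x * (2 * m + v x) * deriv v x = 0) :
    gPoly m (u x) (v x) = 0 := by
  have hderiv := hasDerivAt_fPoly_comp (m := m) (hu x hx).hasDerivAt (hv x hx).hasDerivAt
  have hzero : HasDerivAt (fun y => fPoly m (u y) (v y)) 0 x :=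
    (hasDerivAt_const x 0).congr_of_eventuallyEq
      (Filter.eventuallyEq_of_mem (isOpen_Ioo.mem_nhds hx) hf)
  have htan := sub_eq_zero.mp (hderiv.unique hzero)
  exact (mul_eq_zero.mp (gPoly_mul_eq_zero htan hss)).resolve_right hv'
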